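/- Let J = Z−, assume A11(n) and A22(n) are invertible for all n ∈ Z−\{0}, and suppose the triangular system x(n+1) = (A11(n) A12(n); 0 A22(n)) x(n) admits an exponential dichotomy on Z− with projections P(n) such that dim ker P(0) < +∞. Then the diagonal system x(n+1) = diag(A11(n), A22(n)) x(n) admits an exponential dichotomy on Z−. -/

import Mathlib

/-!
Since all coefficients are invertible on `ℤ⁻`, everything can be transported to time `0` along
the backward flow `E(n) = Φ(0, n)`: a dichotomy becomes a single projection `Q = P(0)` together
with estimates for `E(m)⁻¹ Q E(n)` and `E(m)⁻¹ (1 - Q) E(n)`. Only the unstable space `ker Q` is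
intrinsic: any other bounded projection with the same kernel gives a dichotomy again, with a
larger constant. As `ker P(0)` is finite-dimensional, it has a closed complement of the form
`S₁ × S₂`, and the projection along it is block upper triangular, like the flow of the triangular
system. The diagonal blocks of flow and projection then inherit the estimates, which gives a
dichotomy of each diagonal system and hence of their product.
-/

open Real ContinuousLinearMap

noncomputable section

universe u

variable {X : Type u} [NormedAddCommGroup X] [NormedSpace ℝ X]

/-- The cocycle associated with the system `x(n+1) = A(n) x(n)`, as a function of the
number of steps: `cocycleAux A n k = A(n+k-1) ∘ ⋯ ∘ A(n)`. -/
def cocycleAux (A : ℤ → X →L[ℝ] X) (n : ℤ) : ℕ → (X →L[ℝ] X)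
  | 0 => ContinuousLinearMap.id ℝ X
  | k + 1 => (A (n + k)).comp (cocycleAux A n k)

/-- The cocycle `Φ(m, n) = A(m-1) ⋯ A(n)` for `m > n`, and `Φ(n, n) = Id`. -/
def Phi (A : ℤ → X →L[ℝ] X) (m n : ℤ) : X →L[ℝ] X :=
  cocycleAux A n (m - n).toNat

/-- The system `x(n+1) = A(n) x(n)`, `n ∈ J'`, admits an exponential dichotomy on `J`
with respect to the family of (bounded) projections `P(n)`, `n ∈ J`:
there are constants `K, α > 0` such that
(i) `P(n)` are projections, `A(n) P(n) = P(n+1) A(n)` for `n ∈ J'`, and `A(n)` maps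
`ker P(n)` bijectively onto `ker P(n+1)` for `n ∈ J'`;
(ii) `‖Φ(m,n) P(n)‖ ≤ K e^{-α (m-n)}` for `m ≥ n` in `J`;
(iii) `‖Φ(m,n) (Id - P(n))‖ ≤ K e^{-α (n-m)}` for `m ≤ n` in `J`, where
`Φ(m,n) : ker P(n) → ker P(m)` denotes the inverse of `Φ(n,m)` restricted to `ker P(m)`;
the latter is phrased as: whenever `x ∈ ker P(m)` and `Φ(n,m) x = (Id - P(n)) y`,
then `‖x‖ ≤ K e^{-α (n-m)} ‖y‖`. -/
def IsExpDichotomy (J J' : Set ℤ) (A P : ℤ → X →L[ℝ] X) : Prop :=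
  ∃ K α : ℝ, 0 < K ∧ 0 < α ∧
    (∀ n ∈ J, (P n).comp (P n) = P n) ∧
    (∀ n ∈ J', (A n).comp (P n) = (P (n + 1)).comp (A n)) ∧
    (∀ n ∈ J', Set.BijOn (A n) {x : X | P n x = 0} {x : X | P (n + 1) x = 0}) ∧
    (∀ m n : ℤ, m ∈ J → n ∈ J → n ≤ m →
      ‖(Phi A m n).comp (P n)‖ ≤ K * Real.exp (-α * ((m : ℝ) - (n : ℝ)))) ∧
    (∀ m n : ℤ, m ∈ J → n ∈ J → m ≤ n → ∀ x y : X,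
      P m x = 0 → Phi A n m x = y - P n y →
      ‖x‖ ≤ K * Real.exp (-α * ((n : ℝ) - (m : ℝ))) * ‖y‖)

/-- The system `x(n+1) = A(n) x(n)`, `n ∈ J'`, admits an exponential dichotomy on `J`. -/
def ExpDichotomy (J J' : Set ℤ) (A : ℤ → X →L[ℝ] X) : Prop :=
  ∃ P : ℤ → X →L[ℝ] X, IsExpDichotomy J J' A P

/-- A subspace (given as a set) `S` of `X` is complemented: there is a closed subspace `Z`
of `X` with `X = S ⊕ Z`. -/
def IsComplementedSubspace (S : Set X) : Prop :=
  ∃ Z : Submodule ℝ X, IsClosed (Z : Set X) ∧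
    (∀ v ∈ S, v ∈ Z → v = (0 : X)) ∧ ∀ v : X, ∃ s ∈ S, ∃ z ∈ Z, v = s + z

/-- The subspace `S = {v : sup_{n ∈ ℤ⁺} ‖Φ(n,0) v‖ < ∞}` of initial conditions of bounded
forward solutions. -/
def Sset (A : ℤ → X →L[ℝ] X) : Set X :=
  {v : X | ∃ C : ℝ, ∀ n : ℤ, 0 ≤ n → ‖Phi A n 0 v‖ ≤ C}

/-- The subspace `U(m)` of all `v` for which there is a bounded sequence `(x(n))_{n ≤ m}`
with `x(m) = v` and `x(n) = A(n-1) x(n-1)` for `n ≤ m`. -/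
def Uset (A : ℤ → X →L[ℝ] X) (m : ℤ) : Set X :=
  {v : X | ∃ x : ℤ → X, x m = v ∧ (∃ C : ℝ, ∀ n : ℤ, n ≤ m → ‖x n‖ ≤ C) ∧
    ∀ n : ℤ, n ≤ m → x n = A (n - 1) (x (n - 1))}

variable {X1 : Type u} {X2 : Type u} [NormedAddCommGroup X1] [NormedSpace ℝ X1]
  [NormedAddCommGroup X2] [NormedSpace ℝ X2]

/-- The triangular system operator `(x1, x2) ↦ (A11(n) x1 + A12(n) x2, A22(n) x2)`. -/
def triangular (A11 : ℤ → X1 →L[ℝ] X1) (A12 : ℤ → X2 →L[ℝ] X1)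
    (A22 : ℤ → X2 →L[ℝ] X2) (n : ℤ) : (X1 × X2) →L[ℝ] X1 × X2 :=
  (((A11 n).comp (fst ℝ X1 X2)) + ((A12 n).comp (snd ℝ X1 X2))).prod
    ((A22 n).comp (snd ℝ X1 X2))

/-- The diagonal system operator `(x1, x2) ↦ (A11(n) x1, A22(n) x2)`. -/
def diagonal (A11 : ℤ → X1 →L[ℝ] X1) (A22 : ℤ → X2 →L[ℝ] X2) (n : ℤ) :
    (X1 × X2) →L[ℝ] X1 × X2 :=
  (A11 n).prodMap (A22 n)


section Cocycle

variable {Y : Type u} [NormedAddCommGroup Y] [NormedSpace ℝ Y]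

theorem Phi_self (A : ℤ → X →L[ℝ] X) (n : ℤ) : Phi A n n = ContinuousLinearMap.id ℝ X := by
  simp [Phi, cocycleAux]

theorem Phi_succ_left (A : ℤ → X →L[ℝ] X) {m n : ℤ} (h : n ≤ m) :
    Phi A (m + 1) n = A m ∘L Phi A m n := by
  rw [Phi, Phi, show (m + 1 - n).toNat = (m - n).toNat + 1 by omega, cocycleAux,
    show n + ((m - n).toNat : ℤ) = m by omega]

theorem Phi_succ (A : ℤ → X →L[ℝ] X) (n : ℤ) : Phi A (n + 1) n = A n := by
  rw [Phi_succ_left A le_rfl, Phi_self, comp_id]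

theorem Phi_comp (A : ℤ → X →L[ℝ] X) {m k n : ℤ} (hnk : n ≤ k) (hkm : k ≤ m) :
    Phi A m k ∘L Phi A k n = Phi A m n := by
  induction m, hkm using Int.leInduction with
  | base => rw [Phi_self, id_comp]
  | succ m hkm ih => rw [Phi_succ_left A hkm, Phi_succ_left A (hnk.trans hkm), comp_assoc, ih]

theorem Phi_intertwine (A : ℤ → X →L[ℝ] X) (B : ℤ → Y →L[ℝ] Y) (L : ℤ → X →L[ℝ] Y)
    {m n : ℤ} (hnm : n ≤ m) (h : ∀ j, n ≤ j → j < m → L (j + 1) ∘L A j = B j ∘L L j) :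
    L m ∘L Phi A m n = Phi B m n ∘L L n := by
  induction m, hnm using Int.leInduction with
  | base => rw [Phi_self, Phi_self, comp_id, id_comp]
  | succ m hnm ih =>
    rw [Phi_succ_left A hnm, Phi_succ_left B hnm, ← comp_assoc, h m hnm (by omega), comp_assoc,
      ih (fun j hj hjm => h j hj (by omega)), comp_assoc]

theorem isUnit_Phi (A : ℤ → X →L[ℝ] X) {m n : ℤ} (hnm : n ≤ m)
    (h : ∀ j, n ≤ j → j < m → IsUnit (A j)) : IsUnit (Phi A m n) := by
  induction m, hnm using Int.leInduction with
  | base => rw [Phi_self]; exact isUnit_one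
  | succ m hnm ih =>
    rw [Phi_succ_left A hnm]
    exact (h m hnm (by omega)).mul (ih fun j hj hjm => h j hj (by omega))

end Cocycle

def IsBackwardFlow (A : ℤ → X →L[ℝ] X) (E : ℤ → X ≃L[ℝ] X) : Prop :=
  ∀ n ≤ 0, (E n : X →L[ℝ] X) = Phi A 0 n

theorem exists_isBackwardFlow {A : ℤ → X →L[ℝ] X} (hA : ∀ n ≤ -1, IsUnit (A n)) :
    ∃ E, IsBackwardFlow A E := by
  have : ∀ n : ℤ, ∃ e : X ≃L[ℝ] X, n ≤ 0 → (e : X →L[ℝ] X) = Phi A 0 n := fun n => by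
    by_cases hn : n ≤ 0
    · have hu := isUnit_Phi A hn fun j _ hj => hA j (by omega)
      exact ⟨ContinuousLinearEquiv.unitsEquiv ℝ X hu.unit, fun _ => hu.unit_spec⟩
    · exact ⟨.refl ℝ X, fun h => absurd h hn⟩
  choose E hE using this
  exact ⟨E, hE⟩

namespace IsBackwardFlow

variable {A : ℤ → X →L[ℝ] X} {E : ℤ → X ≃L[ℝ] X}

theorem apply_eq (hE : IsBackwardFlow A E) {n : ℤ} (hn : n ≤ 0) (x : X) :
    E n x = Phi A 0 n x := by
  rw [← hE n hn]; rfl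

theorem apply_zero (hE : IsBackwardFlow A E) (x : X) : E 0 x = x := by
  rw [hE.apply_eq le_rfl, Phi_self, id_apply]

theorem Phi_apply (hE : IsBackwardFlow A E) {m n : ℤ} (hnm : n ≤ m) (hm : m ≤ 0) (x : X) :
    Phi A m n x = (E m).symm (E n x) := by
  rw [ContinuousLinearEquiv.eq_symm_apply, hE.apply_eq hm, hE.apply_eq (hnm.trans hm),
    ← comp_apply, Phi_comp A hnm hm]

theorem apply_step (hE : IsBackwardFlow A E) {n : ℤ} (hn : n ≤ -1) (x : X) :
    E (n + 1) (A n x) = E n x := by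
  rw [← Phi_succ A n, hE.Phi_apply (by omega) (by omega), ContinuousLinearEquiv.apply_symm_apply]

end IsBackwardFlow

/-- An exponential dichotomy on `ℤ⁻` of an invertible system with backward flow `E`, read at
time `0`: the projections are `P(n) = E(n)⁻¹ Q E(n)` and `E(m)⁻¹ E(n) = Φ(m, n)`. -/
structure IsFlowDichotomy (E : ℤ → X ≃L[ℝ] X) (Q : X →L[ℝ] X) (K α : ℝ) : Prop where
  idem : IsIdempotentElem Q
  stable : ∀ m n : ℤ, n ≤ m → m ≤ 0 → ∀ x,
    ‖(E m).symm (Q (E n x))‖ ≤ K * exp (-α * (m - n)) * ‖x‖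
  unstable : ∀ m n : ℤ, m ≤ n → n ≤ 0 → ∀ x,
    ‖(E m).symm (E n x - Q (E n x))‖ ≤ K * exp (-α * (n - m)) * ‖x‖

theorem IsExpDichotomy.exists_isFlowDichotomy {A P : ℤ → X →L[ℝ] X} {E : ℤ → X ≃L[ℝ] X}
    (hP : IsExpDichotomy {n | n ≤ 0} {n | n ≤ -1} A P) (hE : IsBackwardFlow A E) :
    ∃ K α, 0 < K ∧ 0 < α ∧ IsFlowDichotomy E (P 0) K α := by
  obtain ⟨K, α, hK, hα, hidem, hcomm, -, hstable, hunstable⟩ := hP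
  have hPE : ∀ n ≤ 0, ∀ x, P 0 (E n x) = E n (P n x) := fun n hn x => by
    rw [hE.apply_eq hn, hE.apply_eq hn, ← comp_apply,
      Phi_intertwine A A P hn fun j _ hj => (hcomm j (show j ≤ -1 by omega)).symm, comp_apply]
  have hidem0 : IsIdempotentElem (P 0) := hidem 0 (le_refl (0 : ℤ))
  refine ⟨K, α, hK, hα, ⟨hidem0, fun m n hnm hm x => ?_, fun m n hmn hn y => ?_⟩⟩
  · rw [hPE n (hnm.trans hm), ← hE.Phi_apply hnm hm, ← comp_apply]
    exact (le_opNorm _ x).trans (by gcongr; exact hstable m n hm (hnm.trans hm) hnm)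
  · set x := (E m).symm (E n y - P 0 (E n y))
    have hx : E m x = E n y - P 0 (E n y) := ContinuousLinearEquiv.apply_symm_apply _ _
    refine hunstable m n (hmn.trans hn) hn hmn x y ?_ ?_
    · apply (E m).injective
      rw [← hPE m (hmn.trans hn), hx, map_sub, ← mul_apply_eq_comp, hidem0.eq, sub_self, map_zero]
    · rw [hE.Phi_apply hmn hn, hx, hPE n hn, ← map_sub, ContinuousLinearEquiv.symm_apply_apply]

theorem IsFlowDichotomy.isExpDichotomy {A : ℤ → X →L[ℝ] X} {E : ℤ → X ≃L[ℝ] X}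
    {Q : X →L[ℝ] X} {K α : ℝ} (h : IsFlowDichotomy E Q K α) (hK : 0 < K) (hα : 0 < α)
    (hE : IsBackwardFlow A E) :
    IsExpDichotomy {n | n ≤ 0} {n | n ≤ -1} A
      (fun n => ((E n).symm : X →L[ℝ] X) ∘L Q ∘L (E n : X →L[ℝ] X)) := by
  have hQ : ∀ x, Q (Q x) = Q x := fun x => congr($(h.idem) x)
  have hcomm : ∀ n ≤ -1, ∀ x, A n ((E n).symm (Q (E n x))) =
      (E (n + 1)).symm (Q (E (n + 1) (A n x))) := fun n hn x => by
    apply (E (n + 1)).injective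
    rw [hE.apply_step hn, hE.apply_step hn, ContinuousLinearEquiv.apply_symm_apply,
      ContinuousLinearEquiv.apply_symm_apply]
  refine ⟨K, α, hK, hα, fun n _ => ?_, fun n hn => ?_, fun n hn => ⟨?_, ?_, ?_⟩, ?_, ?_⟩
  · ext x; simp [hQ]
  · ext x; exact hcomm n hn x
  · intro x (hx : (E n).symm (Q (E n x)) = 0)
    show (E (n + 1)).symm (Q (E (n + 1) (A n x))) = 0
    rw [← hcomm n hn, hx, map_zero]
  · intro x _ y _ hxy
    have := congrArg (E (n + 1)) hxy
    rwa [hE.apply_step hn, hE.apply_step hn, (E n).injective.eq_iff] at this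
  · intro z (hz : (E (n + 1)).symm (Q (E (n + 1) z)) = 0)
    refine ⟨(E n).symm (E (n + 1) z), ?_, ?_⟩
    · show (E n).symm (Q (E n _)) = 0
      rw [ContinuousLinearEquiv.apply_symm_apply, (E (n + 1)).symm.map_eq_zero_iff.1 hz,
        map_zero]
    · apply (E (n + 1)).injective
      rw [hE.apply_step hn, ContinuousLinearEquiv.apply_symm_apply]
  · intro m n hm _ hnm
    refine opNorm_le_bound _ (by positivity) fun x => ?_
    rw [comp_apply, hE.Phi_apply hnm hm]
    simpa using h.stable m n hnm hm x
  · intro m n _ hn hmn x y _ hxy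
    rw [hE.Phi_apply hmn hn, ContinuousLinearEquiv.symm_apply_eq] at hxy
    simp only [comp_apply, ContinuousLinearEquiv.coe_coe, map_sub,
      ContinuousLinearEquiv.apply_symm_apply] at hxy
    rw [← (E m).symm_apply_apply x, hxy]
    exact h.unstable m n hmn hn y

namespace IsFlowDichotomy

variable {Y : Type u} [NormedAddCommGroup Y] [NormedSpace ℝ Y] {E : ℤ → X ≃L[ℝ] X}
  {Q Q' : X →L[ℝ] X} {F : ℤ → Y ≃L[ℝ] Y} {q : Y →L[ℝ] Y} {K α : ℝ}

theorem norm_apply_le (h : IsFlowDichotomy E Q K α) (hE0 : ∀ x, E 0 x = x) {n : ℤ}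
    (hn : n ≤ 0) (x : X) : ‖Q (E n x)‖ ≤ K * exp (α * n) * ‖x‖ := by
  have hE0' : ∀ x, (E 0).symm x = x := fun x => by rw [(E 0).symm_apply_eq, hE0]
  simpa [hE0'] using h.stable 0 n hn le_rfl x

theorem norm_symm_apply_le_of_apply_eq_zero (h : IsFlowDichotomy E Q K α)
    (hE0 : ∀ x, E 0 x = x) {m : ℤ} (hm : m ≤ 0) {z : X} (hz : Q z = 0) :
    ‖(E m).symm z‖ ≤ K * exp (α * m) * ‖z‖ := by
  simpa [hE0, hz] using h.unstable m 0 hm le_rfl z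

theorem norm_symm_apply_sub_le_of_ker_eq (h : IsFlowDichotomy E Q K α)
    (hE0 : ∀ x, E 0 x = x) (hK : 0 ≤ K) (hQ' : IsIdempotentElem Q') (hker : Q'.ker = Q.ker)
    {m n : ℤ} (hm : m ≤ 0) (hn : n ≤ 0) (x : X) :
    ‖(E m).symm (Q (E n x) - Q' (Q (E n x)))‖ ≤
      K * K * (1 + ‖Q'‖) * (exp (α * m) * exp (α * n)) * ‖x‖ := by
  set w := Q (E n x)
  have hw : Q (w - Q' w) = 0 := by
    have : w - Q' w ∈ Q'.ker := by
      simp only [LinearMap.mem_ker, coe_coe, map_sub, ← mul_apply_eq_comp, hQ'.eq, sub_self]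
    rwa [hker] at this
  calc ‖(E m).symm (w - Q' w)‖ ≤ K * exp (α * m) * ‖w - Q' w‖ :=
        h.norm_symm_apply_le_of_apply_eq_zero hE0 hm hw
    _ ≤ K * exp (α * m) * ((1 + ‖Q'‖) * (K * exp (α * n) * ‖x‖)) := by
        gcongr
        calc ‖w - Q' w‖ ≤ ‖w‖ + ‖Q'‖ * ‖w‖ :=
              (norm_sub_le _ _).trans (by gcongr; exact le_opNorm _ _)
          _ = (1 + ‖Q'‖) * ‖w‖ := by ring
          _ ≤ _ := by gcongr; exact h.norm_apply_le hE0 hn x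
    _ = _ := by ring

theorem of_ker_eq (h : IsFlowDichotomy E Q K α) (hE0 : ∀ x, E 0 x = x) (hK : 0 ≤ K)
    (hα : 0 ≤ α) (hQ' : IsIdempotentElem Q') (hker : Q'.ker = Q.ker) :
    IsFlowDichotomy E Q' (K + K * K * (1 + ‖Q'‖)) α := by
  have hsplit : ∀ u, Q' u = Q u - (Q u - Q' (Q u)) := fun u => by
    have : u - Q u ∈ Q.ker := by
      simp only [LinearMap.mem_ker, coe_coe, map_sub, ← mul_apply_eq_comp, h.idem.eq, sub_self]
    rw [← hker, LinearMap.mem_ker, coe_coe, map_sub, sub_eq_zero] at this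
    rw [sub_sub_cancel, this]
  have hexp : ∀ a b : ℝ, a ≤ 0 → exp (α * a) * exp (α * b) ≤ exp (-α * (a - b)) :=
    fun a b ha => by rw [← exp_add]; gcongr; nlinarith
  refine ⟨hQ', fun m n hnm hm x => ?_, fun m n hmn hn x => ?_⟩
  · calc ‖(E m).symm (Q' (E n x))‖
          ≤ ‖(E m).symm (Q (E n x))‖ + ‖(E m).symm (Q (E n x) - Q' (Q (E n x)))‖ := by
          rw [hsplit, map_sub]; exact norm_sub_le _ _
      _ ≤ K * exp (-α * (m - n)) * ‖x‖ +
            K * K * (1 + ‖Q'‖) * (exp (α * m) * exp (α * n)) * ‖x‖ :=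
          add_le_add (h.stable m n hnm hm x)
            (h.norm_symm_apply_sub_le_of_ker_eq hE0 hK hQ' hker hm (hnm.trans hm) x)
      _ ≤ _ := by
          rw [add_mul, add_mul]
          gcongr
          exact hexp m n (by exact_mod_cast hm)
  · calc ‖(E m).symm (E n x - Q' (E n x))‖
          ≤ ‖(E m).symm (E n x - Q (E n x))‖ + ‖(E m).symm (Q (E n x) - Q' (Q (E n x)))‖ := by
          rw [hsplit, sub_sub_eq_add_sub, add_sub_right_comm, map_add]; exact norm_add_le _ _
      _ ≤ K * exp (-α * (n - m)) * ‖x‖ +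
            K * K * (1 + ‖Q'‖) * (exp (α * m) * exp (α * n)) * ‖x‖ :=
          add_le_add (h.unstable m n hmn hn x)
            (h.norm_symm_apply_sub_le_of_ker_eq hE0 hK hQ' hker (hmn.trans hn) hn x)
      _ ≤ _ := by
          rw [add_mul, add_mul, mul_comm (exp _)]
          gcongr
          exact hexp n m (by exact_mod_cast hn)


theorem restrict (h : IsFlowDichotomy E Q K α) (ι : Y →L[ℝ] X) (hι : ∀ y, ‖ι y‖ = ‖y‖)
    (hE : ∀ n ≤ 0, ∀ y, E n (ι y) = ι (F n y)) (hQ : ∀ y, Q (ι y) = ι (q y)) :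
    IsFlowDichotomy F q K α := by
  have hι_inj : Function.Injective ι := ((AddMonoidHomClass.isometry_iff_norm ι).2 hι).injective
  have hE_symm : ∀ n ≤ 0, ∀ y, (E n).symm (ι y) = ι ((F n).symm y) := fun n hn y => by
    rw [ContinuousLinearEquiv.symm_apply_eq, hE n hn, ContinuousLinearEquiv.apply_symm_apply]
  refine ⟨?_, fun m n hnm hm y => ?_, fun m n hmn hn y => ?_⟩
  · ext y
    apply hι_inj
    rw [mul_apply_eq_comp, ← hQ, ← hQ, ← mul_apply_eq_comp, h.idem]
  · rw [← hι, ← hE_symm m hm, ← hQ, ← hE n (hnm.trans hm), ← hι y]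
    exact h.stable m n hnm hm (ι y)
  · rw [← hι, ← hE_symm m (hmn.trans hn), map_sub, ← hQ, ← hE n hn, ← hι y]
    exact h.unstable m n hmn hn (ι y)

theorem factor (h : IsFlowDichotomy E Q K α) (p : X →L[ℝ] Y) (s : Y →L[ℝ] X)
    (hp : ∀ x, ‖p x‖ ≤ ‖x‖) (hs : ∀ y, ‖s y‖ = ‖y‖) (hps : ∀ y, p (s y) = y)
    (hE : ∀ n ≤ 0, ∀ x, p (E n x) = F n (p x)) (hQ : ∀ x, p (Q x) = q (p x)) :
    IsFlowDichotomy F q K α := by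
  have hE_symm : ∀ n ≤ 0, ∀ x, p ((E n).symm x) = (F n).symm (p x) := fun n hn x => by
    rw [ContinuousLinearEquiv.eq_symm_apply, ← hE n hn, ContinuousLinearEquiv.apply_symm_apply]
  refine ⟨?_, fun m n hnm hm y => ?_, fun m n hmn hn y => ?_⟩
  · ext y
    rw [mul_apply_eq_comp, ← hps y, ← hQ, ← hQ, ← mul_apply_eq_comp, h.idem]
  · rw [← hps y, ← hE n (hnm.trans hm), ← hQ, ← hE_symm m hm, hps y, ← hs y]
    exact (hp _).trans (h.stable m n hnm hm (s y))
  · rw [← hps y, ← hE n hn, ← hQ, ← map_sub, ← hE_symm m (hmn.trans hn), hps y, ← hs y]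
    exact (hp _).trans (h.unstable m n hmn hn (s y))

theorem prodCongr {E1 : ℤ → X1 ≃L[ℝ] X1} {E2 : ℤ → X2 ≃L[ℝ] X2} {q1 : X1 →L[ℝ] X1}
    {q2 : X2 →L[ℝ] X2} (h1 : IsFlowDichotomy E1 q1 K α) (h2 : IsFlowDichotomy E2 q2 K α)
    (hK : 0 ≤ K) :
    IsFlowDichotomy (fun n => (E1 n).prodCongr (E2 n)) (q1.prodMap q2) K α := by
  refine ⟨ContinuousLinearMap.ext fun x => Prod.ext congr($(h1.idem) x.1) congr($(h2.idem) x.2),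
    fun m n hnm hm x => norm_prod_le_iff.2 ⟨?_, ?_⟩,
    fun m n hmn hn x => norm_prod_le_iff.2 ⟨?_, ?_⟩⟩
  · exact (h1.stable m n hnm hm x.1).trans (by gcongr; exact norm_fst_le x)
  · exact (h2.stable m n hnm hm x.2).trans (by gcongr; exact norm_snd_le x)
  · exact (h1.unstable m n hmn hn x.1).trans (by gcongr; exact norm_fst_le x)
  · exact (h2.unstable m n hmn hn x.2).trans (by gcongr; exact norm_snd_le x)

end IsFlowDichotomy

theorem isUnit_triangular {A11 : ℤ → X1 →L[ℝ] X1} {A12 : ℤ → X2 →L[ℝ] X1}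
    {A22 : ℤ → X2 →L[ℝ] X2} {n : ℤ} (h11 : IsUnit (A11 n)) (h22 : IsUnit (A22 n)) :
    IsUnit (triangular A11 A12 A22 n) := by
  set B1 : X1 →L[ℝ] X1 := ↑h11.unit⁻¹
  set B2 : X2 →L[ℝ] X2 := ↑h22.unit⁻¹
  have hB1 : ∀ x, A11 n (B1 x) = x := fun x => congr($h11.mul_val_inv x)
  have hB1' : ∀ x, B1 (A11 n x) = x := fun x => congr($h11.val_inv_mul x)
  have hB2 : ∀ x, A22 n (B2 x) = x := fun x => congr($h22.mul_val_inv x)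
  have hB2' : ∀ x, B2 (A22 n x) = x := fun x => congr($h22.val_inv_mul x)
  refine isUnit_iff_exists.2 ⟨(B1 ∘L (fst ℝ X1 X2 - A12 n ∘L B2 ∘L snd ℝ X1 X2)).prod
    (B2 ∘L snd ℝ X1 X2), ContinuousLinearMap.ext fun x => ?_,
    ContinuousLinearMap.ext fun x => ?_⟩
  · simp [triangular, hB1, hB2]
  · simp [triangular, hB1', hB2']

section Blocks

variable {A11 : ℤ → X1 →L[ℝ] X1} {A12 : ℤ → X2 →L[ℝ] X1} {A22 : ℤ → X2 →L[ℝ] X2}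
  {E1 : ℤ → X1 ≃L[ℝ] X1} {E2 : ℤ → X2 ≃L[ℝ] X2}

theorem IsBackwardFlow.apply_inl_of_triangular {E : ℤ → (X1 × X2) ≃L[ℝ] X1 × X2}
    (hE : IsBackwardFlow (triangular A11 A12 A22) E) (hE1 : IsBackwardFlow A11 E1) {n : ℤ}
    (hn : n ≤ 0) (v : X1) : E n (inl ℝ X1 X2 v) = inl ℝ X1 X2 (E1 n v) := by
  have := Phi_intertwine A11 (triangular A11 A12 A22) (fun _ => inl ℝ X1 X2) hn
    fun _ _ _ => ContinuousLinearMap.ext fun v => by simp [triangular]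
  rw [hE.apply_eq hn, hE1.apply_eq hn]
  exact congr($this v).symm

theorem IsBackwardFlow.snd_apply_of_triangular {E : ℤ → (X1 × X2) ≃L[ℝ] X1 × X2}
    (hE : IsBackwardFlow (triangular A11 A12 A22) E) (hE2 : IsBackwardFlow A22 E2) {n : ℤ}
    (hn : n ≤ 0) (x : X1 × X2) : snd ℝ X1 X2 (E n x) = E2 n (snd ℝ X1 X2 x) := by
  have := Phi_intertwine (triangular A11 A12 A22) A22 (fun _ => snd ℝ X1 X2) hn
    fun _ _ _ => ContinuousLinearMap.ext fun x => by simp [triangular]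
  rw [hE.apply_eq hn, hE2.apply_eq hn]
  exact congr($this x)

theorem IsBackwardFlow.prodCongr_of_diagonal (hE1 : IsBackwardFlow A11 E1)
    (hE2 : IsBackwardFlow A22 E2) :
    IsBackwardFlow (diagonal A11 A22) fun n => (E1 n).prodCongr (E2 n) := fun n hn => by
  have h1 := Phi_intertwine (diagonal A11 A22) A11 (fun _ => fst ℝ X1 X2) hn
    fun _ _ _ => ContinuousLinearMap.ext fun x => by simp [diagonal]
  have h2 := Phi_intertwine (diagonal A11 A22) A22 (fun _ => snd ℝ X1 X2) hn
    fun _ _ _ => ContinuousLinearMap.ext fun x => by simp [diagonal]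
  refine ContinuousLinearMap.ext fun x => Prod.ext ?_ ?_
  · simpa [hE1.apply_eq hn] using congr($h1 x).symm
  · simpa [hE2.apply_eq hn] using congr($h2 x).symm

end Blocks

theorem Submodule.isCompl_prod_of_isCompl_comap_inl_of_isCompl_map_snd {R M N : Type*} [Ring R]
    [AddCommGroup M] [Module R M] [AddCommGroup N] [Module R N] {U : Submodule R (M × N)}
    {S1 : Submodule R M} {S2 : Submodule R N} (h1 : IsCompl S1 (U.comap (LinearMap.inl R M N)))
    (h2 : IsCompl S2 (U.map (LinearMap.snd R M N))) : IsCompl (S1.prod S2) U := by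
  constructor
  · rw [Submodule.disjoint_def]
    intro x hxS hxU
    obtain ⟨hx1, hx2⟩ := Submodule.mem_prod.1 hxS
    have hx2' : x.2 = 0 :=
      Submodule.disjoint_def.1 h2.disjoint _ hx2 (Submodule.mem_map_of_mem hxU)
    have hx : (x.1, 0) ∈ U := by rwa [← hx2']
    exact Prod.ext (Submodule.disjoint_def.1 h1.disjoint _ hx1 hx) hx2'
  · rw [codisjoint_iff, eq_top_iff]
    intro x _
    obtain ⟨s2, hs2, _, ⟨u, hu, rfl⟩, hx2⟩ :=
      Submodule.mem_sup.1 (h2.sup_eq_top ▸ Submodule.mem_top : x.2 ∈ _)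
    obtain ⟨s1, hs1, v, hv, hx1⟩ :=
      Submodule.mem_sup.1 (h1.sup_eq_top ▸ Submodule.mem_top : x.1 - u.1 ∈ _)
    refine Submodule.mem_sup.2 ⟨(s1, s2), Submodule.mem_prod.2 ⟨hs1, hs2⟩, u + (v, 0),
      U.add_mem hu hv, Prod.ext ?_ ?_⟩
    · simp only [Prod.fst_add]; rw [← add_assoc, add_right_comm, hx1, sub_add_cancel]
    · simpa using hx2

theorem exists_isIdempotentElem_ker_eq_snd_apply_inl_eq_zero (U : Submodule ℝ (X1 × X2))
    [FiniteDimensional ℝ U] : ∃ Q : (X1 × X2) →L[ℝ] X1 × X2,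
      IsIdempotentElem Q ∧ Q.ker = U ∧ ∀ v, snd ℝ X1 X2 (Q (inl ℝ X1 X2 v)) = 0 := by
  set U1 := U.comap (LinearMap.inl ℝ X1 X2)
  set U2 := U.map (LinearMap.snd ℝ X1 X2)
  have : FiniteDimensional ℝ U1 := Module.Finite.of_injective
    ((LinearMap.inl ℝ X1 X2).restrict (q := U) fun _ hx => hx)
    fun a b hab => Subtype.ext (LinearMap.inl_injective congr(($hab : X1 × X2)))
  obtain ⟨S1, hS1, hc1⟩ :=
    (Submodule.ClosedComplemented.of_finiteDimensional U1).exists_isClosed_isCompl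
  obtain ⟨S2, hS2, hc2⟩ :=
    (Submodule.ClosedComplemented.of_finiteDimensional U2).exists_isClosed_isCompl
  have hc := Submodule.isCompl_prod_of_isCompl_comap_inl_of_isCompl_map_snd hc1.symm hc2.symm
  have htop := Submodule.IsCompl.isTopCompl_of_isClosed_of_finiteDimensional hc (hS1.prod hS2)
  refine ⟨(S1.prod S2).projectionL U htop, Submodule.isIdempotentElem_projectionL htop,
    Submodule.ker_projectionL htop, fun v => ?_⟩
  set y := (S1.prod S2).projectionL U htop (v, 0)
  have hyS : y.2 ∈ S2 := (Submodule.mem_prod.1 (Submodule.projectionL_apply_mem htop _)).2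
  have hyU : -y.2 ∈ U2 := by
    have := Submodule.mem_map_of_mem (f := LinearMap.snd ℝ X1 X2)
      (Submodule.sub_projection_mem hc ((v, 0) : X1 × X2))
    rwa [LinearMap.snd_apply, Prod.snd_sub, zero_sub] at this
  exact Submodule.disjoint_def.1 hc2.symm.disjoint _ hyS (neg_mem_iff.1 hyU)

theorem IsFlowDichotomy.prodCongr_of_triangular {A11 : ℤ → X1 →L[ℝ] X1}
    {A12 : ℤ → X2 →L[ℝ] X1} {A22 : ℤ → X2 →L[ℝ] X2} {E : ℤ → (X1 × X2) ≃L[ℝ] X1 × X2}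
    {E1 : ℤ → X1 ≃L[ℝ] X1} {E2 : ℤ → X2 ≃L[ℝ] X2} {Q : (X1 × X2) →L[ℝ] X1 × X2} {K α : ℝ}
    (h : IsFlowDichotomy E Q K α) (hK : 0 ≤ K) (hE : IsBackwardFlow (triangular A11 A12 A22) E)
    (hE1 : IsBackwardFlow A11 E1) (hE2 : IsBackwardFlow A22 E2)
    (hQ : ∀ v, snd ℝ X1 X2 (Q (inl ℝ X1 X2 v)) = 0) :
    IsFlowDichotomy (fun n => (E1 n).prodCongr (E2 n))
      ((fst ℝ X1 X2 ∘L Q ∘L inl ℝ X1 X2).prodMap (snd ℝ X1 X2 ∘L Q ∘L inr ℝ X1 X2)) K α := by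
  refine IsFlowDichotomy.prodCongr ?_ ?_ hK
  · refine h.restrict (inl ℝ X1 X2) (fun v => by simp [Prod.norm_def])
      (fun n hn v => hE.apply_inl_of_triangular hE1 hn v) fun v => Prod.ext rfl (hQ v)
  · refine h.factor (snd ℝ X1 X2) (inr ℝ X1 X2) norm_snd_le
      (fun w => by simp [Prod.norm_def]) (fun _ => rfl)
      (fun n hn x => hE.snd_apply_of_triangular hE2 hn x) fun x => ?_
    have hx : x = inl ℝ X1 X2 x.1 + inr ℝ X1 X2 x.2 := by ext <;> simp
    rw [hx, map_add, map_add, hQ, zero_add]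
    simp

theorem diagonal_dichotomy_of_triangular_invertible_finiteCodim_Zminus_general {H1 : Type u} {H2 : Type u}
    [NormedAddCommGroup H1] [InnerProductSpace ℝ H1]
    [NormedAddCommGroup H2] [InnerProductSpace ℝ H2]
    (A11 : ℤ → H1 →L[ℝ] H1) (A12 : ℤ → H2 →L[ℝ] H1) (A22 : ℤ → H2 →L[ℝ] H2)
    (hinv : ∀ n : ℤ, n ≤ -1 → IsUnit (A11 n) ∧ IsUnit (A22 n))
    (P : ℤ → (H1 × H2) →L[ℝ] H1 × H2)
    (hP : IsExpDichotomy {n : ℤ | n ≤ 0} {n : ℤ | n ≤ -1} (triangular A11 A12 A22) P)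
    (hfin : Module.rank ℝ (LinearMap.ker (P 0 : (H1 × H2) →ₗ[ℝ] H1 × H2)) < Cardinal.aleph0) :
    ExpDichotomy {n : ℤ | n ≤ 0} {n : ℤ | n ≤ -1} (diagonal A11 A22) := by
  obtain ⟨E1, hE1⟩ := exists_isBackwardFlow fun n hn => (hinv n hn).1
  obtain ⟨E2, hE2⟩ := exists_isBackwardFlow fun n hn => (hinv n hn).2
  obtain ⟨E, hE⟩ := exists_isBackwardFlow fun n hn =>
    isUnit_triangular (A12 := A12) (hinv n hn).1 (hinv n hn).2
  obtain ⟨K, α, hK, hα, hPE⟩ := hP.exists_isFlowDichotomy hE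
  have := Module.rank_lt_aleph0_iff.1 hfin
  obtain ⟨Q, hQ, hker, hQinl⟩ := exists_isIdempotentElem_ker_eq_snd_apply_inl_eq_zero (P 0).ker
  have hQE := (hPE.of_ker_eq hE.apply_zero hK.le hα.le hQ hker).prodCongr_of_triangular
    (by positivity) hE hE1 hE2 hQinl
  exact ⟨_, hQE.isExpDichotomy (by positivity) hα (hE1.prodCongr_of_diagonal hE2)⟩

theorem diagonal_dichotomy_of_triangular_invertible_finiteCodim_Zminus {H1 : Type u} {H2 : Type u}
    [NormedAddCommGroup H1] [InnerProductSpace ℝ H1] [CompleteSpace H1]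
    [NormedAddCommGroup H2] [InnerProductSpace ℝ H2] [CompleteSpace H2]
    (A11 : ℤ → H1 →L[ℝ] H1) (A12 : ℤ → H2 →L[ℝ] H1) (A22 : ℤ → H2 →L[ℝ] H2)
    (hinv : ∀ n : ℤ, n ≤ -1 → IsUnit (A11 n) ∧ IsUnit (A22 n))
    (P : ℤ → (H1 × H2) →L[ℝ] H1 × H2)
    (hP : IsExpDichotomy {n : ℤ | n ≤ 0} {n : ℤ | n ≤ -1} (triangular A11 A12 A22) P)
    (hfin : Module.rank ℝ (LinearMap.ker (P 0 : (H1 × H2) →ₗ[ℝ] H1 × H2)) < Cardinal.aleph0) :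
    ExpDichotomy {n : ℤ | n ≤ 0} {n : ℤ | n ≤ -1} (diagonal A11 A22) :=
  diagonal_dichotomy_of_triangular_invertible_finiteCodim_Zminus_general A11 A12 A22 hinv P hP hfin

end
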